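/- arXiv:1312.4429 — 2 statements merged into one kernel-verified Lean document; each statement's English description precedes it below -/
import Mathlib

section
/- The boxes of the bit-reversal construction are empty: let m, m' in {0,...,2^k−1} differ exactly in the i-th bit, with m < m'. Then for every p in {0,...,2^k−1} with m < p < m', the value y(p) does not lie strictly between y(m) and y(m'), where y is the k-bit bit-reversal map. Consequently, no point (p, y(p)) of the bit-reversal point set lies in the open box spanned by (m, y(m)) and (m', y(m')). -/
/-- The `k`-bit bit-reversal map. -/
def bitrev (k m : ℕ) : ℕ :=
  ∑ i ∈ Finset.range k, if m.testBit i then 2 ^ (k - 1 - i) else 0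

/-!
Write `j = i - 1`, so that `m' = m ^^^ 2 ^ j`, and `m < m'` forces bit `j` of `m` to be clear.
Then `bitrev k m' = bitrev k m + bitrev k (2 ^ j)` with `bitrev k (2 ^ j) ≤ 2 ^ (k - (j + 1))`.
Any `p` strictly between `m` and `m'` shares with `m` all bits above `j`; bit reversal turns these
into the low `k - (j + 1)` bits, so `bitrev k p ≡ bitrev k m [MOD 2 ^ (k - (j + 1))]`, which
leaves no room for `bitrev k p` strictly between `bitrev k m` and `bitrev k m'`.
-/

namespace Nat

lemma testBit_eq_false_of_lt_xor_two_pow {m j : ℕ} (h : m < m ^^^ 2 ^ j) :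
    m.testBit j = false := by
  by_contra hj
  rw [Bool.not_eq_false] at hj
  exact (Nat.lt_of_testBit j (by simp [hj]) hj fun t ht => by simp [ht.ne]).not_gt h

lemma div_two_pow_succ_eq_of_lt_of_lt_xor {m p j : ℕ} (h1 : m < p) (h2 : p < m ^^^ 2 ^ j) :
    p / 2 ^ (j + 1) = m / 2 ^ (j + 1) := by
  have hm' : (m ^^^ 2 ^ j) / 2 ^ (j + 1) = m / 2 ^ (j + 1) := by
    rw [Nat.xor_div_two_pow, Nat.div_eq_of_lt (Nat.pow_lt_pow_succ one_lt_two), Nat.xor_zero]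
  exact le_antisymm (hm' ▸ Nat.div_le_div_right h2.le) (Nat.div_le_div_right h1.le)

end Nat

lemma bitrev_xor_of_and_eq_zero {a b : ℕ} (k : ℕ) (h : a &&& b = 0) :
    bitrev k (a ^^^ b) = bitrev k a + bitrev k b := by
  simp only [bitrev, ← Finset.sum_add_distrib]
  refine Finset.sum_congr rfl fun t _ => ?_
  have hab := congrArg (·.testBit t) h
  simp only [Nat.testBit_and, Nat.zero_testBit, Bool.and_eq_false_iff] at hab
  rcases hab with hab | hab <;> simp [hab]

lemma bitrev_two_pow (k j : ℕ) : bitrev k (2 ^ j) = if j < k then 2 ^ (k - 1 - j) else 0 := by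
  simp [bitrev, Nat.testBit_two_pow, Finset.sum_ite_eq]

lemma bitrev_two_pow_le (k j : ℕ) : bitrev k (2 ^ j) ≤ 2 ^ (k - (j + 1)) := by
  rw [bitrev_two_pow]
  split_ifs
  · exact le_of_eq (by congr 1; omega)
  · exact Nat.zero_le _

lemma bitrev_modEq_of_div_eq {a b n : ℕ} (k : ℕ) (h : a / 2 ^ n = b / 2 ^ n) :
    bitrev k a ≡ bitrev k b [MOD 2 ^ (k - n)] := by
  refine Nat.ModEq.sum fun t _ => ?_
  by_cases ht : n ≤ t
  · have hab := congrArg (·.testBit (t - n)) h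
    simp only [Nat.testBit_div_two_pow, Nat.sub_add_cancel ht] at hab
    rw [hab]
  · have hdvd : 2 ^ (k - n) ∣ 2 ^ (k - 1 - t) := pow_dvd_pow 2 (by omega)
    have hzero (c : Bool) : (if c then 2 ^ (k - 1 - t) else 0) ≡ 0 [MOD 2 ^ (k - n)] :=
      Nat.modEq_zero_iff_dvd.2 (by split_ifs <;> simp [hdvd])
    exact (hzero _).trans (hzero _).symm

theorem bitrev_box_empty_general (k i m m' : ℕ) (hlt : m < m') (hxor : m ^^^ m' = 2 ^ (i - 1))
    (p : ℕ) (h1 : m < p) (h2 : p < m') :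
    ¬ (min (bitrev k m) (bitrev k m') < bitrev k p ∧
        bitrev k p < max (bitrev k m) (bitrev k m')) := by
  obtain rfl : m' = m ^^^ 2 ^ (i - 1) := by rw [← hxor, Nat.xor_xor_cancel_left]
  have hsplit : bitrev k (m ^^^ 2 ^ (i - 1)) = bitrev k m + bitrev k (2 ^ (i - 1)) := by
    refine bitrev_xor_of_and_eq_zero k ?_
    rw [Nat.and_comm, Nat.two_pow_and, Nat.testBit_eq_false_of_lt_xor_two_pow hlt,
      Bool.toNat_false, mul_zero]
  have hmod : bitrev k m ≡ bitrev k p [MOD 2 ^ (k - (i - 1 + 1))] :=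
    bitrev_modEq_of_div_eq k (Nat.div_two_pow_succ_eq_of_lt_of_lt_xor h1 h2).symm
  rw [hsplit, min_eq_left le_self_add, max_eq_right le_self_add]
  rintro ⟨hlo, hhi⟩
  have hgap := hmod.add_le_of_lt hlo
  have hstep := bitrev_two_pow_le k (i - 1)
  omega

/-- The boxes of the bit-reversal construction are empty: if `m < m'` differ exactly in the
`i`-th bit, then for every `p` with `m < p < m'`, the value `y(p)` does not lie strictly
between `y(m)` and `y(m')`; hence no point `(p, y(p))` of the bit-reversal point set lies
in the open box spanned by `(m, y(m))` and `(m', y(m'))`. -/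
theorem bitrev_box_empty (k i m m' : ℕ) (hi1 : 1 ≤ i) (hik : i ≤ k)
    (hm' : m' < 2 ^ k) (hlt : m < m') (hxor : m ^^^ m' = 2 ^ (i - 1))
    (p : ℕ) (hp : p < 2 ^ k) (h1 : m < p) (h2 : p < m') :
    ¬ (min (bitrev k m) (bitrev k m') < bitrev k p ∧
        bitrev k p < max (bitrev k m) (bitrev k m')) :=
  bitrev_box_empty_general k i m m' hlt hxor p h1 h2
end

section
/- Boxes of the same size are pairwise disjoint: fix i with 1 ≤ i ≤ k, and consider the open axis-parallel boxes spanned by pairs (m, y(m)), (m', y(m')) where m XOR m' = 2^{i−1}. Then any two such open boxes arising from distinct pairs are disjoint. -/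
/-- The open axis-parallel box `(x₁, x₂) × (y₁, y₂)` in the plane. -/
def openBox (x₁ x₂ y₁ y₂ : ℕ) : Set (ℝ × ℝ) :=
  Set.Ioo (x₁ : ℝ) (x₂ : ℝ) ×ˢ Set.Ioo (y₁ : ℝ) (y₂ : ℝ)

/-!
Write `e = i - 1`, `k = e + 1 + d` and `y_j` for the `j`-bit reversal. A pair `m < m'` with
`m ^^^ m' = 2 ^ e` is `m = 2 ^ e * (2 * c) + r`, `m' = m + 2 ^ e` with `r < 2 ^ e`, and
`y_k m = 2 ^ (d + 1) * y_e r + y_d c`, `y_k m' = y_k m + 2 ^ d`. Two distinct pairs either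
have different `c`, and then their x-sides lie in different blocks
`[2 ^ (e + 1) * c, 2 ^ (e + 1) * (c + 1))`, or the same `c` and different `r`, and then their
y-sides lie in different blocks of length `2 ^ (d + 1)` because `y_e` is injective on
`[0, 2 ^ e)`.
-/

theorem bitrev_two_pow_mul_add (e d a r : ℕ) (hr : r < 2 ^ e) :
    bitrev (e + d) (2 ^ e * a + r) = 2 ^ d * bitrev e r + bitrev d a := by
  simp only [bitrev, Finset.sum_range_add, Finset.mul_sum, Nat.testBit_two_pow_mul_add _ hr]
  congr 1 <;> refine Finset.sum_congr rfl fun j hj => ?_ <;> rw [Finset.mem_range] at hj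
  · simp only [hj, if_true, mul_ite, mul_zero, ← pow_add]
    congr 2; omega
  · simp only [show ¬ e + j < e by omega, if_false, Nat.add_sub_cancel_left]
    congr 2; omega

theorem bitrev_one (a : ℕ) : bitrev 1 a = a % 2 := by
  rw [bitrev, Finset.sum_range_one, Nat.testBit_zero]
  rcases Nat.mod_two_eq_zero_or_one a with h | h <;> simp [h]

theorem bitrev_succ (k n : ℕ) : bitrev (k + 1) n = 2 * bitrev k (n % 2 ^ k) + n / 2 ^ k % 2 := by
  conv_lhs => rw [← Nat.div_add_mod n (2 ^ k)]
  rw [bitrev_two_pow_mul_add _ _ _ _ (Nat.mod_lt _ (by positivity)), bitrev_one, pow_one]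

theorem bitrev_injOn (k : ℕ) : Set.InjOn (bitrev k) (Set.Iio (2 ^ k)) := by
  induction k with
  | zero => intro n hn n' hn' _; simp_all
  | succ k ih =>
    intro n hn n' hn' h
    simp only [Set.mem_Iio, pow_succ] at hn hn'
    rw [bitrev_succ, bitrev_succ] at h
    have hmod : n % 2 ^ k = n' % 2 ^ k :=
      ih (Nat.mod_lt _ (by positivity)) (Nat.mod_lt _ (by positivity)) (by omega)
    have hdiv : n / 2 ^ k = n' / 2 ^ k := by
      have := Nat.div_lt_of_lt_mul hn
      have := Nat.div_lt_of_lt_mul hn'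
      generalize n / 2 ^ k = a, n' / 2 ^ k = a' at *
      omega
    rw [← Nat.div_add_mod n (2 ^ k), ← Nat.div_add_mod n' (2 ^ k), hdiv, hmod]

theorem exists_eq_of_lt_of_xor_eq_two_pow {e m m' : ℕ} (h : m < m') (hx : m ^^^ m' = 2 ^ e) :
    ∃ c r, r < 2 ^ e ∧ m = 2 ^ e * (2 * c) + r ∧ m' = 2 ^ e * (2 * c + 1) + r := by
  have hmod : m % 2 ^ e = m' % 2 ^ e := by
    have := congrArg (· % 2 ^ e) hx
    simp only [Nat.xor_mod_two_pow, Nat.mod_self] at this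
    rw [← xor_cancel_left (m % 2 ^ e) (m' % 2 ^ e), this, Nat.xor_zero]
  have hdiv : m' / 2 ^ e = m / 2 ^ e ^^^ 1 := by
    have := congrArg (· / 2 ^ e) hx
    simp only [Nat.xor_div_two_pow, Nat.div_self (Nat.two_pow_pos e)] at this
    rw [← this, xor_cancel_left]
  have hlt : m / 2 ^ e < m' / 2 ^ e := by
    by_contra! hle
    have := Nat.mul_le_mul_left (2 ^ e) hle
    have := Nat.div_add_mod m (2 ^ e)
    have := Nat.div_add_mod m' (2 ^ e)
    omega
  obtain ⟨c, hc⟩ : Even (m / 2 ^ e) := by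
    by_contra hodd
    rw [hdiv, Nat.xor_one_of_odd (Nat.not_even_iff_odd.1 hodd)] at hlt
    generalize m / 2 ^ e = a at hlt
    omega
  refine ⟨c, m % 2 ^ e, Nat.mod_lt _ (Nat.two_pow_pos e), ?_, ?_⟩
  · rw [two_mul, ← hc, Nat.div_add_mod]
  · rw [hmod, two_mul, ← hc, ← Nat.xor_one_of_even ⟨c, hc⟩, ← hdiv, Nat.div_add_mod]

theorem bitrev_two_mul_add (d c : ℕ) {b : ℕ} (hb : b < 2) :
    bitrev (1 + d) (2 * c + b) = 2 ^ d * b + bitrev d c := by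
  have := bitrev_two_pow_mul_add 1 d c b (by rwa [pow_one])
  rwa [pow_one, bitrev_one, Nat.mod_eq_of_lt hb] at this

theorem disjoint_openBox {x₁ x₂ y₁ y₂ x₁' x₂' y₁' y₂' : ℕ}
    (h : x₂ ≤ x₁' ∨ x₂' ≤ x₁ ∨ y₂ ≤ y₁' ∨ y₂' ≤ y₁) :
    Disjoint (openBox x₁ x₂ y₁ y₂) (openBox x₁' x₂' y₁' y₂') := by
  simp only [openBox, Set.disjoint_prod, Set.Ioo_disjoint_Ioo]
  rcases h with h | h | h | h
  · exact .inl <| (min_le_left _ _).trans <| (Nat.cast_le.2 h).trans (le_max_right _ _)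
  · exact .inl <| (min_le_right _ _).trans <| (Nat.cast_le.2 h).trans (le_max_left _ _)
  · exact .inr <| (min_le_left _ _).trans <| (Nat.cast_le.2 h).trans (le_max_right _ _)
  · exact .inr <| (min_le_right _ _).trans <| (Nat.cast_le.2 h).trans (le_max_left _ _)

theorem mul_add_le_mul_add {w a a' s s' : ℕ} (ha : a < a') (hs : s ≤ w + s') :
    w * a + s ≤ w * a' + s' := by
  have := Nat.mul_le_mul_left w (Nat.succ_le_of_lt ha)
  rw [Nat.mul_succ] at this
  omega

theorem openBox_pair_eq (e d c : ℕ) {r : ℕ} (hr : r < 2 ^ e) :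
    openBox (2 ^ e * (2 * c) + r) (2 ^ e * (2 * c + 1) + r)
      (min (bitrev (e + (1 + d)) (2 ^ e * (2 * c) + r))
        (bitrev (e + (1 + d)) (2 ^ e * (2 * c + 1) + r)))
      (max (bitrev (e + (1 + d)) (2 ^ e * (2 * c) + r))
        (bitrev (e + (1 + d)) (2 ^ e * (2 * c + 1) + r))) =
    openBox (2 ^ e * (2 * c) + r) (2 ^ e * (2 * c + 1) + r)
      (2 ^ (1 + d) * bitrev e r + bitrev d c)
      (2 ^ (1 + d) * bitrev e r + (2 ^ d + bitrev d c)) := by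
  have h₀ := bitrev_two_mul_add d c (b := 0) two_pos
  have h₁ := bitrev_two_mul_add d c one_lt_two
  rw [add_zero, mul_zero, zero_add] at h₀
  rw [mul_one] at h₁
  have hle : 2 ^ (1 + d) * bitrev e r + bitrev d c ≤
      2 ^ (1 + d) * bitrev e r + (2 ^ d + bitrev d c) :=
    Nat.add_le_add_left (Nat.le_add_left _ _) _
  rw [bitrev_two_pow_mul_add _ _ _ _ hr, bitrev_two_pow_mul_add _ _ _ _ hr, h₀, h₁,
    min_eq_left hle, max_eq_right hle]

theorem same_size_boxes_disjoint_general (k i : ℕ) (hi1 : 1 ≤ i) (hik : i ≤ k)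
    (m m' q q' : ℕ)
    (h1 : m < m') (h2 : q < q')
    (hx1 : m ^^^ m' = 2 ^ (i - 1)) (hx2 : q ^^^ q' = 2 ^ (i - 1))
    (hne : (m, m') ≠ (q, q')) :
    Disjoint
      (openBox m m' (min (bitrev k m) (bitrev k m')) (max (bitrev k m) (bitrev k m')))
      (openBox q q' (min (bitrev k q) (bitrev k q')) (max (bitrev k q) (bitrev k q'))) := by
  obtain ⟨d, rfl⟩ : ∃ d, k = i - 1 + (1 + d) := ⟨k - i, by omega⟩
  obtain ⟨c, r, hr, rfl, rfl⟩ := exists_eq_of_lt_of_xor_eq_two_pow h1 hx1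
  obtain ⟨c', r', hr', rfl, rfl⟩ := exists_eq_of_lt_of_xor_eq_two_pow h2 hx2
  rw [openBox_pair_eq _ _ _ hr, openBox_pair_eq _ _ _ hr']
  apply disjoint_openBox
  rcases eq_or_ne c c' with rfl | hc
  · have hd : 2 ^ d ≤ 2 ^ (1 + d) := Nat.pow_le_pow_right two_pos (by omega)
    have hrr : bitrev (i - 1) r ≠ bitrev (i - 1) r' :=
      (bitrev_injOn _).ne hr hr' (by rintro rfl; exact hne rfl)
    rcases hrr.lt_or_gt with h | h
    · exact .inr <| .inr <| .inl <| mul_add_le_mul_add h (by omega)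
    · exact .inr <| .inr <| .inr <| mul_add_le_mul_add h (by omega)
  · rcases hc.lt_or_gt with h | h
    · exact .inl <| mul_add_le_mul_add (by omega : 2 * c + 1 < 2 * c') (by omega)
    · exact .inr <| .inl <| mul_add_le_mul_add (by omega : 2 * c' + 1 < 2 * c) (by omega)

/-- Boxes of the same size are pairwise disjoint: for a fixed bit position `i`, the open
boxes spanned by pairs `(m, y(m))`, `(m', y(m'))` with `m ^^^ m' = 2^(i-1)` arising from
distinct pairs are disjoint. -/
theorem same_size_boxes_disjoint (k i : ℕ) (hi1 : 1 ≤ i) (hik : i ≤ k)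
    (m m' q q' : ℕ) (hm' : m' < 2 ^ k) (hq' : q' < 2 ^ k)
    (h1 : m < m') (h2 : q < q')
    (hx1 : m ^^^ m' = 2 ^ (i - 1)) (hx2 : q ^^^ q' = 2 ^ (i - 1))
    (hne : (m, m') ≠ (q, q')) :
    Disjoint
      (openBox m m' (min (bitrev k m) (bitrev k m')) (max (bitrev k m) (bitrev k m')))
      (openBox q q' (min (bitrev k q) (bitrev k q')) (max (bitrev k q) (bitrev k q'))) :=
  same_size_boxes_disjoint_general k i hi1 hik m m' q q' h1 h2 hx1 hx2 hne
end
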